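/- Let n ≥ 2. For every integer j ≥ 0 and every μ ∈ ℤ^n, the unrestricted one-dimensional sum of the level-1 perfect crystal of type D_{n+1}^{(2)} satisfies the three-term Weyl-reflection identity g_j(n, μ) + g_j(0, μ + e_n) + g_j(n̄, μ + 2e_n) = g_j(n, μ[μ_n ↦ −μ_n−2]) + g_j(0, μ[μ_n ↦ −μ_n−1]) + g_j(n̄, μ[μ_n ↦ −μ_n]), where μ[μ_n ↦ a] denotes the vector obtained from μ by replacing its last entry μ_n by a. (This is the case m = 2 of the Weyl-reflection identity for the classical index i = n and the element b = n, which satisfies φ_n(n) = 2 with f_n(n) = 0 and f_n^2(n) = n̄; the reflection r_n sends μ_n to −μ_n.) -/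

import Mathlib

open Finset

noncomputable section

/-- The indeterminate `q`, living in the field of rational functions `ℚ(q)`. -/
def q : RatFunc ℚ := RatFunc.X

/-! The level-1 perfect crystal of type `D_{n+1}^{(2)}` is
`B = {1,…,n,0,n̄,…,1̄,φ}` (with `2n+2` elements), where `B∖{φ}` is totally ordered by
`1 ≺ ⋯ ≺ n ≺ 0 ≺ n̄ ≺ ⋯ ≺ 1̄`. We encode it as `Fin (2n+2)`: position `p < n` is the
letter `p+1`, position `n` is the letter `0`, position `n+r` (`1 ≤ r ≤ n`) is the barred
letter `\overline{n+1-r}`, and position `2n+1` is `φ`. -/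

/-- The energy function: `H(b,b') = 0` if `b,b' ≠ φ` with `b ≺ b'`, or if
`(b,b') = (0,0)` or `(φ,φ)`; `H(b,b') = 1` if exactly one of `b,b'` is `φ`; and
`H(b,b') = 2` if `b,b' ≠ φ`, `b ⪰ b'` and `(b,b') ≠ (0,0)`. -/
def H (n : ℕ) (b b' : Fin (2 * n + 2)) : ℤ :=
  if (b : ℕ) = 2 * n + 1 ∧ (b' : ℕ) = 2 * n + 1 then 0
  else if (b : ℕ) = 2 * n + 1 ∨ (b' : ℕ) = 2 * n + 1 then 1
  else if (b : ℕ) = n ∧ (b' : ℕ) = n then 0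
  else if (b : ℕ) < (b' : ℕ) then 0 else 2

/-- Contents: the letter `k` (`1 ≤ k ≤ n`) has content `e_k`, the letter `k̄` has content
`-e_k`, and the letters `0` and `φ` have content `0`; here `ℤ^n` is indexed by `Fin n`,
with index `k-1` corresponding to `μ_k`. -/
def cont (n : ℕ) (b : Fin (2 * n + 2)) (k : Fin n) : ℤ :=
  if (b : ℕ) = (k : ℕ) then 1 else if (b : ℕ) = 2 * n - (k : ℕ) then -1 else 0

/-- The unrestricted one-dimensional sum `g_j(b,μ)`: the sum of
`q^{Σ_{i=1}^j i·H(b_{i+1},b_i)}` over all sequences `(b_1,…,b_j) ∈ B^j` of total content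
`μ`, with `b_{j+1} = b`. -/
def g (n j : ℕ) (b : Fin (2 * n + 2)) (μ : Fin n → ℤ) : RatFunc ℚ :=
  ∑ p ∈ Finset.univ.filter (fun p : Fin (j + 1) → Fin (2 * n + 2) =>
      p (Fin.last j) = b ∧
      ∀ k, (∑ i : Fin j, cont n (p i.castSucc) k) = μ k),
    q ^ (∑ i : Fin j, ((i : ℤ) + 1) * H n (p i.succ) (p i.castSucc))

/-!
Write `f_b = g_j(b, ·)`, `e = e_n`, and let `r` be the reflection `μ_n ↦ -μ_n`. Splitting off
the last letter gives `g_{j+1}(b, μ) = ∑_c q^{(j+1) H(b,c)} g_j(c, μ - cont c)`. Off the `n`-string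
`{n, 0, n̄}` the content has zero `n`-th entry, and `H(b, c)`, `H(c, b)` do not depend on the
choice of `b` in the string. Hence, by induction on `j`, three families are `r`-invariant at once:
`f_c` for `c` off the string, `U(ν) = f_n(ν - e) + f_0(ν) + f_n̄(ν + e)`, and
`V(ν) = f_n(ν - 2e) + f_n(ν - e) + U(ν + e)`; indeed the recursion writes `U` and `V` at `j + 1`
as `(q^{2(j+1)} - 1)` times `V`-terms plus symmetric sums `F(ν - ae) + F(ν + ae)` of invariant
functions at `j`. The theorem is the invariance of `U` at `ν = μ + e`.
-/

section Reflection

variable {n : ℕ}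

def shiftLast (ν : Fin n → ℤ) (a : ℤ) : Fin n → ℤ :=
  fun k => ν k + if (k : ℕ) = n - 1 then a else 0

def reflectLast (ν : Fin n → ℤ) : Fin n → ℤ :=
  fun k => if (k : ℕ) = n - 1 then -ν k else ν k

@[simp]
lemma shiftLast_shiftLast (ν : Fin n → ℤ) (a b : ℤ) :
    shiftLast (shiftLast ν a) b = shiftLast ν (a + b) := by
  funext k; simp only [shiftLast]; split_ifs <;> ring

@[simp]
lemma shiftLast_zero (ν : Fin n → ℤ) : shiftLast ν 0 = ν := by
  funext k; simp [shiftLast]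

lemma reflectLast_shiftLast (ν : Fin n → ℤ) (a : ℤ) :
    reflectLast (shiftLast ν a) = shiftLast (reflectLast ν) (-a) := by
  funext k; simp only [reflectLast, shiftLast]; split_ifs <;> ring

@[simp]
lemma reflectLast_eq_zero_iff (ν : Fin n → ℤ) : reflectLast ν = 0 ↔ ν = 0 := by
  simp only [funext_iff, Pi.zero_apply, reflectLast]
  refine forall_congr' fun k => ?_
  split_ifs <;> simp

lemma reflectLast_eq_ite (hn : 0 < n) (ν : Fin n → ℤ) :
    reflectLast ν = fun k : Fin n => if (k : ℕ) = n - 1 then -ν ⟨n - 1, by omega⟩ else ν k := by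
  funext k
  simp only [reflectLast]
  split_ifs with hk
  · rw [show k = ⟨n - 1, by omega⟩ from Fin.ext hk]
  · rfl

lemma shiftLast_reflectLast_neg_eq_ite (hn : 0 < n) (ν : Fin n → ℤ) (a : ℤ) :
    shiftLast (reflectLast ν) (-a) =
      fun k : Fin n => if (k : ℕ) = n - 1 then -ν ⟨n - 1, by omega⟩ - a else ν k := by
  funext k
  simp only [shiftLast, reflectLast_eq_ite hn]
  split_ifs <;> ring

def IsReflectInvariant {α : Type*} (F : (Fin n → ℤ) → α) : Prop :=
  ∀ ν, F (reflectLast ν) = F ν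

lemma IsReflectInvariant.apply_shiftLast {α : Type*} {F : (Fin n → ℤ) → α}
    (hF : IsReflectInvariant F) (ν : Fin n → ℤ) (a : ℤ) :
    F (shiftLast (reflectLast ν) a) = F (shiftLast ν (-a)) := by
  rw [← hF (shiftLast ν (-a)), reflectLast_shiftLast, neg_neg]

end Reflection

lemma g_zero (n : ℕ) (b : Fin (2 * n + 2)) (μ : Fin n → ℤ) :
    g n 0 b μ = if μ = 0 then 1 else 0 := by
  rw [g, Finset.sum_filter, Finset.sum_eq_single_of_mem (fun _ => b) (Finset.mem_univ _)]
  · simp [funext_iff, eq_comm]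
  · intro p _ hp
    rw [if_neg fun h => hp (funext fun i => by rw [show i = Fin.last 0 by ext; omega]; exact h.1)]

lemma g_succ (n j : ℕ) (b : Fin (2 * n + 2)) (μ : Fin n → ℤ) :
    g n (j + 1) b μ =
      ∑ c, q ^ ((j + 1 : ℤ) * H n b c) * g n j c (fun k => μ k - cont n c k) := by
  simp only [g, Finset.sum_filter, Finset.mul_sum]
  rw [Finset.sum_comm, ← (Fin.snocEquiv fun _ => Fin (2 * n + 2)).sum_comp,
    Fintype.sum_prod_type, Finset.sum_comm]
  refine Finset.sum_congr rfl fun p _ => ?_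
  rw [Finset.sum_eq_single_of_mem b (Finset.mem_univ _),
    Finset.sum_eq_single_of_mem (p (Fin.last j)) (Finset.mem_univ _)]
  · have hcont : (∀ k, ∑ i : Fin j, cont n (p i.castSucc) k + cont n (p (Fin.last j)) k = μ k) ↔
        ∀ k, ∑ i : Fin j, cont n (p i.castSucc) k = μ k - cont n (p (Fin.last j)) k :=
      forall_congr' fun k => eq_sub_iff_add_eq.symm
    simp only [Fin.snocEquiv_apply, Fin.snoc_last, Fin.sum_univ_castSucc, Fin.snoc_castSucc,
      Fin.succ_last, Fin.succ_castSucc, Fin.val_castSucc, Fin.val_last, true_and, hcont]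
    split_ifs
    · rw [zpow_add₀ RatFunc.X_ne_zero, mul_comm]
    · rw [mul_zero]
  · intro c _ hc
    rw [if_neg fun h => hc h.1.symm, mul_zero]
  · intro c _ hc
    rw [if_neg fun h => hc (by simpa using h.1)]

section NString

variable (n : ℕ)

def letterN : Fin (2 * n + 2) := ⟨n - 1, by omega⟩

def letterZero : Fin (2 * n + 2) := ⟨n, by omega⟩

def letterNBar : Fin (2 * n + 2) := ⟨n + 1, by omega⟩

def nString : Finset (Fin (2 * n + 2)) := {letterN n, letterZero n, letterNBar n}

variable {n}

@[simp] lemma val_letterN : (letterN n : ℕ) = n - 1 := rfl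

@[simp] lemma val_letterZero : (letterZero n : ℕ) = n := rfl

@[simp] lemma val_letterNBar : (letterNBar n : ℕ) = n + 1 := rfl

lemma mem_nString {b : Fin (2 * n + 2)} :
    b ∈ nString n ↔ (b : ℕ) = n - 1 ∨ (b : ℕ) = n ∨ (b : ℕ) = n + 1 := by
  simp [nString, Fin.ext_iff]

lemma H_letterN_letterN (hn : 0 < n) : H n (letterN n) (letterN n) = 2 := by
  simp [H]; omega

lemma H_letterN_letterZero (hn : 0 < n) : H n (letterN n) (letterZero n) = 0 := by
  simp [H]; omega

lemma H_letterN_letterNBar (hn : 0 < n) : H n (letterN n) (letterNBar n) = 0 := by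
  simp [H]; omega

lemma H_letterNBar_of_mem (hn : 0 < n) {c : Fin (2 * n + 2)} (hc : c ∈ nString n) :
    H n (letterNBar n) c = 2 := by
  rw [mem_nString] at hc
  simp [H]; omega

lemma H_letterZero_left (hn : 0 < n) (c : Fin (2 * n + 2)) :
    H n (letterZero n) c = H n (letterN n) c := by
  simp [H]; omega

lemma H_left_of_mem_of_not_mem {b d : Fin (2 * n + 2)} (hb : b ∈ nString n)
    (hd : d ∉ nString n) : H n b d = H n (letterN n) d := by
  rw [mem_nString] at hb hd
  simp [H]; omega

lemma H_right_of_mem_of_not_mem {b d : Fin (2 * n + 2)} (hb : b ∈ nString n)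
    (hd : d ∉ nString n) : H n d b = H n d (letterN n) := by
  rw [mem_nString] at hb hd
  simp [H]; omega

lemma sub_cont_letterN (ν : Fin n → ℤ) :
    (fun k => ν k - cont n (letterN n) k) = shiftLast ν (-1) := by
  funext k
  simp [cont, shiftLast]; omega

lemma sub_cont_letterZero (ν : Fin n → ℤ) :
    (fun k => ν k - cont n (letterZero n) k) = ν := by
  funext k
  simp [cont]; omega

lemma sub_cont_letterNBar (ν : Fin n → ℤ) :
    (fun k => ν k - cont n (letterNBar n) k) = shiftLast ν 1 := by
  funext k
  simp [cont, shiftLast]; omega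

lemma reflectLast_sub_cont_of_not_mem {d : Fin (2 * n + 2)} (hd : d ∉ nString n)
    (ν : Fin n → ℤ) :
    (fun k => reflectLast ν k - cont n d k) = reflectLast fun k => ν k - cont n d k := by
  rw [mem_nString] at hd
  funext k
  simp [cont, reflectLast]; omega

end NString

section Recursion

variable {n : ℕ}

def restSum (n j : ℕ) (b : Fin (2 * n + 2)) (ν : Fin n → ℤ) : RatFunc ℚ :=
  ∑ d ∈ (nString n)ᶜ, q ^ ((j + 1 : ℤ) * H n b d) * g n j d (fun k => ν k - cont n d k)

def stringSum (n j : ℕ) (ν : Fin n → ℤ) : RatFunc ℚ :=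
  g n j (letterN n) (shiftLast ν (-1)) + g n j (letterZero n) ν +
    g n j (letterNBar n) (shiftLast ν 1)

/-- The coefficient of `q ^ (2 (j + 1)) - 1` in the recursion for `stringSum n (j + 1)`. -/
def correctionSum (n j : ℕ) (ν : Fin n → ℤ) : RatFunc ℚ :=
  g n j (letterN n) (shiftLast ν (-2)) + g n j (letterN n) (shiftLast ν (-1)) +
    stringSum n j (shiftLast ν 1)

lemma restSum_eq_of_mem (j : ℕ) {b : Fin (2 * n + 2)} (hb : b ∈ nString n) :
    restSum n j b = restSum n j (letterN n) := by
  funext ν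
  refine Finset.sum_congr rfl fun d hd => ?_
  rw [H_left_of_mem_of_not_mem hb (Finset.mem_compl.1 hd)]

lemma g_succ_eq_add_restSum (hn : 0 < n) (j : ℕ) (b : Fin (2 * n + 2)) (ν : Fin n → ℤ) :
    g n (j + 1) b ν =
      q ^ ((j + 1 : ℤ) * H n b (letterN n)) * g n j (letterN n) (shiftLast ν (-1)) +
        q ^ ((j + 1 : ℤ) * H n b (letterZero n)) * g n j (letterZero n) ν +
        q ^ ((j + 1 : ℤ) * H n b (letterNBar n)) * g n j (letterNBar n) (shiftLast ν 1) +
        restSum n j b ν := by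
  rw [g_succ, ← Finset.sum_add_sum_compl (nString n), restSum]
  congr 1
  rw [nString, Finset.sum_insert (by simp [Fin.ext_iff]; omega),
    Finset.sum_insert (by simp [Fin.ext_iff]), Finset.sum_singleton,
    sub_cont_letterN, sub_cont_letterZero, sub_cont_letterNBar, add_assoc]

lemma g_succ_letterN (hn : 0 < n) (j : ℕ) (ν : Fin n → ℤ) :
    g n (j + 1) (letterN n) ν =
      stringSum n j ν + (q ^ ((j + 1 : ℤ) * 2) - 1) * g n j (letterN n) (shiftLast ν (-1)) +
        restSum n j (letterN n) ν := by
  rw [g_succ_eq_add_restSum hn, H_letterN_letterN hn, H_letterN_letterZero hn,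
    H_letterN_letterNBar hn, stringSum]
  simp only [mul_zero, zpow_zero, one_mul]
  ring

lemma g_succ_letterZero (hn : 0 < n) (j : ℕ) :
    g n (j + 1) (letterZero n) = g n (j + 1) (letterN n) := by
  funext ν
  simp only [g_succ, H_letterZero_left hn]

lemma g_succ_letterNBar (hn : 0 < n) (j : ℕ) (ν : Fin n → ℤ) :
    g n (j + 1) (letterNBar n) ν =
      q ^ ((j + 1 : ℤ) * 2) * stringSum n j ν + restSum n j (letterN n) ν := by
  have hNBar : letterNBar n ∈ nString n := by simp [nString]
  rw [g_succ_eq_add_restSum hn, restSum_eq_of_mem j hNBar, stringSum,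
    H_letterNBar_of_mem hn (by simp [nString]), H_letterNBar_of_mem hn (by simp [nString]),
    H_letterNBar_of_mem hn hNBar]
  ring

lemma g_succ_of_not_mem (hn : 0 < n) (j : ℕ) {c : Fin (2 * n + 2)} (hc : c ∉ nString n)
    (ν : Fin n → ℤ) :
    g n (j + 1) c ν =
      q ^ ((j + 1 : ℤ) * H n c (letterN n)) * stringSum n j ν + restSum n j c ν := by
  rw [g_succ_eq_add_restSum hn, stringSum,
    H_right_of_mem_of_not_mem (b := letterZero n) (by simp [nString]) hc,
    H_right_of_mem_of_not_mem (b := letterNBar n) (by simp [nString]) hc]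
  ring

lemma stringSum_succ (hn : 0 < n) (j : ℕ) (ν : Fin n → ℤ) :
    stringSum n (j + 1) ν =
      (q ^ ((j + 1 : ℤ) * 2) - 1) * correctionSum n j ν +
        (stringSum n j ν + (stringSum n j (shiftLast ν (-1)) + stringSum n j (shiftLast ν 1))) +
        (restSum n j (letterN n) ν +
          (restSum n j (letterN n) (shiftLast ν (-1)) +
            restSum n j (letterN n) (shiftLast ν 1))) := by
  rw [stringSum, g_succ_letterZero hn, g_succ_letterN hn, g_succ_letterN hn,
    g_succ_letterNBar hn, correctionSum, shiftLast_shiftLast]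
  simp only [Int.reduceNeg, Int.reduceAdd]
  ring

lemma correctionSum_succ (hn : 0 < n) (j : ℕ) (ν : Fin n → ℤ) :
    correctionSum n (j + 1) ν =
      (q ^ ((j + 1 : ℤ) * 2) - 1) *
          (correctionSum n j (shiftLast ν (-1)) + correctionSum n j (shiftLast ν 1) -
            stringSum n j ν) +
        (stringSum n j ν + (stringSum n j (shiftLast ν (-1)) + stringSum n j (shiftLast ν 1)) +
          (stringSum n j (shiftLast ν (-2)) + stringSum n j (shiftLast ν 2))) +
        (restSum n j (letterN n) ν +
          (restSum n j (letterN n) (shiftLast ν (-1)) + restSum n j (letterN n) (shiftLast ν 1)) +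
          (restSum n j (letterN n) (shiftLast ν (-2)) +
            restSum n j (letterN n) (shiftLast ν 2))) := by
  rw [correctionSum, stringSum_succ hn, g_succ_letterN hn, g_succ_letterN hn]
  simp only [correctionSum, shiftLast_shiftLast, Int.reduceNeg, Int.reduceAdd, shiftLast_zero]
  ring

end Recursion

section Invariance

variable {n : ℕ}

lemma isReflectInvariant_restSum {j : ℕ}
    (hg : ∀ d ∉ nString n, IsReflectInvariant (g n j d)) (b : Fin (2 * n + 2)) :
    IsReflectInvariant (restSum n j b) := fun ν =>
  Finset.sum_congr rfl fun d hd => by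
    rw [reflectLast_sub_cont_of_not_mem (Finset.mem_compl.1 hd), hg d (Finset.mem_compl.1 hd)]

lemma isReflectInvariant_zero :
    (∀ c, IsReflectInvariant (g n 0 c)) ∧ IsReflectInvariant (stringSum n 0) ∧
      IsReflectInvariant (correctionSum n 0) := by
  have hg (c : Fin (2 * n + 2)) : IsReflectInvariant (g n 0 c) := fun ν => by
    simp only [g_zero, reflectLast_eq_zero_iff]
  have hconst (c : Fin (2 * n + 2)) : g n 0 c = g n 0 (letterN n) := by
    funext μ
    rw [g_zero, g_zero]
  have hU : IsReflectInvariant (stringSum n 0) := fun ν => by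
    simp only [stringSum, hconst, (hg _).apply_shiftLast, hg _ ν, neg_neg]
    ring
  refine ⟨hg, hU, fun ν => ?_⟩
  simp only [correctionSum, (hg _).apply_shiftLast, hU.apply_shiftLast]
  simp only [stringSum, hconst, shiftLast_shiftLast, Int.reduceNeg, Int.reduceAdd, shiftLast_zero]
  ring

variable (hn : 0 < n) {j : ℕ} (hU : IsReflectInvariant (stringSum n j))
include hn hU

lemma isReflectInvariant_g_succ_of_not_mem {c : Fin (2 * n + 2)} (hc : c ∉ nString n)
    (hR : IsReflectInvariant (restSum n j c)) : IsReflectInvariant (g n (j + 1) c) := fun ν => by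
  rw [g_succ_of_not_mem hn j hc, g_succ_of_not_mem hn j hc, hU, hR]

variable (hV : IsReflectInvariant (correctionSum n j))
  (hR : IsReflectInvariant (restSum n j (letterN n)))
include hV hR

lemma isReflectInvariant_stringSum_succ : IsReflectInvariant (stringSum n (j + 1)) := fun ν => by
  rw [stringSum_succ hn, stringSum_succ hn]
  simp only [hU ν, hV ν, hR ν, hU.apply_shiftLast, hR.apply_shiftLast, neg_neg]
  ring

lemma isReflectInvariant_correctionSum_succ :
    IsReflectInvariant (correctionSum n (j + 1)) := fun ν => by
  rw [correctionSum_succ hn, correctionSum_succ hn]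
  simp only [hU ν, hR ν, hU.apply_shiftLast, hV.apply_shiftLast, hR.apply_shiftLast, neg_neg]
  ring

end Invariance

theorem isReflectInvariant_stringSum {n : ℕ} (hn : 0 < n) (j : ℕ) :
    IsReflectInvariant (stringSum n j) := by
  suffices h : (∀ c ∉ nString n, IsReflectInvariant (g n j c)) ∧
      IsReflectInvariant (stringSum n j) ∧ IsReflectInvariant (correctionSum n j) from h.2.1
  induction j with
  | zero =>
    obtain ⟨hg, hU, hV⟩ := isReflectInvariant_zero (n := n)
    exact ⟨fun c _ => hg c, hU, hV⟩
  | succ j ih =>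
    obtain ⟨hg, hU, hV⟩ := ih
    have hR := isReflectInvariant_restSum hg
    exact ⟨fun c hc => isReflectInvariant_g_succ_of_not_mem hn hU hc (hR c),
      isReflectInvariant_stringSum_succ hn hU hV (hR _),
      isReflectInvariant_correctionSum_succ hn hU hV (hR _)⟩

/-- the `m = 2` case of the Weyl-reflection identity for the level-1
perfect crystal of type `D_{n+1}^{(2)}`, for the classical index `i = n` and the element
`b = n` (position `n-1`), with `f_n(n) = 0` (position `n`) and `f_n^2(n) = n̄`
(position `n+1`); the reflection `r_n` sends `μ_n` to `-μ_n`. Here `e_n` is the `n`-th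
standard basis vector of `ℤ^n` (index `n-1` of `Fin n`), and `μ[μ_n ↦ a]` replaces the
last entry of `μ` by `a`. -/
theorem statement13 (n : ℕ) (hn : 2 ≤ n) (j : ℕ) (μ : Fin n → ℤ) :
    g n j ⟨n - 1, by omega⟩ μ +
      g n j ⟨n, by omega⟩
        (fun k : Fin n => μ k + (if (k : ℕ) = n - 1 then 1 else 0)) +
      g n j ⟨n + 1, by omega⟩
        (fun k : Fin n => μ k + (if (k : ℕ) = n - 1 then 2 else 0)) =
    g n j ⟨n - 1, by omega⟩
        (fun k : Fin n => if (k : ℕ) = n - 1 then -μ ⟨n - 1, by omega⟩ - 2 else μ k) +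
      g n j ⟨n, by omega⟩
        (fun k : Fin n => if (k : ℕ) = n - 1 then -μ ⟨n - 1, by omega⟩ - 1 else μ k) +
      g n j ⟨n + 1, by omega⟩
        (fun k : Fin n => if (k : ℕ) = n - 1 then -μ ⟨n - 1, by omega⟩ else μ k) := by
  have key := isReflectInvariant_stringSum (by omega : 0 < n) j (shiftLast μ 1)
  simp only [stringSum, reflectLast_shiftLast, shiftLast_shiftLast, Int.reduceNeg,
    Int.reduceAdd, shiftLast_zero] at key
  rw [shiftLast_reflectLast_neg_eq_ite (by omega), shiftLast_reflectLast_neg_eq_ite (by omega),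
    reflectLast_eq_ite (by omega)] at key
  exact key.symm

end
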